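/- For smooth functions α, μ : ℝ → ℝ, define the vector fields Y(α), W(μ) : ℝ⁶ → ℝ⁶, in coordinates z = (t, x, y, u, v, w), by Y(α)(z) = (0, α(t), 0, −(x/2)α'(t)·v, (x/2)α'(t)·u, −(xy/2)α''(t)) and W(μ)(z) = (0, 0, 0, μ(t)·v, −μ(t)·u, y μ'(t)). Then for all smooth α₁, α₂ : ℝ → ℝ and all z ∈ ℝ⁶, the Lie bracket [Y(α₁), Y(α₂)](z) := D(Y(α₂))(z)·(Y(α₁)(z)) − D(Y(α₁))(z)·(Y(α₂)(z)) equals −(1/2) W(α₁α₂' − α₁'α₂)(z). (This is the Kac–Moody-type commutation relation [𝒴(α₁), 𝒴(α₂)] = −½𝒲(α₁α̇₂ − α̇₁α₂) of the symmetry algebra of the Davey–Stewartson system.) -/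

import Mathlib

/-- The generalized Galilei boost generator `𝒴(α)` of the Davey--Stewartson system,
as a vector field on `ℝ⁶` with coordinates `z = (t, x, y, u, v, w)`. -/
noncomputable def dsY (α : ℝ → ℝ) : (Fin 6 → ℝ) → (Fin 6 → ℝ) :=
  fun z =>
    ![0,
      α (z 0),
      0,
      -(z 1 / 2) * deriv α (z 0) * z 4,
      (z 1 / 2) * deriv α (z 0) * z 3,
      -(z 1 * z 2 / 2) * deriv (deriv α) (z 0)]

/-- The time-dependent gauge rotation generator `𝒲(μ)` of the Davey--Stewartson system,
as a vector field on `ℝ⁶` with coordinates `z = (t, x, y, u, v, w)`. -/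
noncomputable def dsW (μ : ℝ → ℝ) : (Fin 6 → ℝ) → (Fin 6 → ℝ) :=
  fun z =>
    ![0, 0, 0, μ (z 0) * z 4, -(μ (z 0)) * z 3, z 2 * deriv μ (z 0)]

lemma fderiv_dsY_apply (α : ℝ → ℝ) (hα : ContDiff ℝ (⊤ : ℕ∞) α) (z w : Fin 6 → ℝ) :
    fderiv ℝ (dsY α) z w =
      ![0,
        deriv α (z 0) * w 0,
        0,
        -(w 1 / 2) * deriv α (z 0) * z 4 - (z 1 / 2) * deriv (deriv α) (z 0) * w 0 * z 4
          - (z 1 / 2) * deriv α (z 0) * w 4,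
        (w 1 / 2) * deriv α (z 0) * z 3 + (z 1 / 2) * deriv (deriv α) (z 0) * w 0 * z 3
          + (z 1 / 2) * deriv α (z 0) * w 3,
        -((w 1 * z 2 + z 1 * w 2) / 2) * deriv (deriv α) (z 0)
          - (z 1 * z 2 / 2) * deriv (deriv (deriv α)) (z 0) * w 0] := by
  obtain ⟨hd, hα'⟩ := contDiff_infty_iff_deriv.mp (hα.of_le (by simp))
  obtain ⟨hd', hα''⟩ := contDiff_infty_iff_deriv.mp hα'
  obtain ⟨hd'', -⟩ := contDiff_infty_iff_deriv.mp hα''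
  have p0 := hasFDerivAt_apply (𝕜 := ℝ) (0 : Fin 6) z
  have p1 := hasFDerivAt_apply (𝕜 := ℝ) (1 : Fin 6) z
  have p2 := hasFDerivAt_apply (𝕜 := ℝ) (2 : Fin 6) z
  have p3 := hasFDerivAt_apply (𝕜 := ℝ) (3 : Fin 6) z
  have p4 := hasFDerivAt_apply (𝕜 := ℝ) (4 : Fin 6) z
  have hA : HasFDerivAt (fun z : Fin 6 → ℝ => α (z 0)) _ z :=
    (hd (z 0)).hasDerivAt.comp_hasFDerivAt z p0
  have hB : HasFDerivAt (fun z : Fin 6 → ℝ => deriv α (z 0))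
      (deriv (deriv α) (z 0) • (ContinuousLinearMap.proj 0 : (Fin 6 → ℝ) →L[ℝ] ℝ)) z := by
    have := (hd' (z 0)).hasDerivAt.comp_hasFDerivAt z p0; exact this
  have hC : HasFDerivAt (fun z : Fin 6 → ℝ => deriv (deriv α) (z 0))
      (deriv (deriv (deriv α)) (z 0) • (ContinuousLinearMap.proj 0 : (Fin 6 → ℝ) →L[ℝ] ℝ)) z := by
    have := (hd'' (z 0)).hasDerivAt.comp_hasFDerivAt z p0; exact this
  have h3 : HasFDerivAt (fun z : Fin 6 → ℝ => -(z 1 / 2) * deriv α (z 0) * z 4) _ z :=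
    (((p1.mul_const (2:ℝ)⁻¹).neg.mul hB).mul p4)
  have h4 : HasFDerivAt (fun z : Fin 6 → ℝ => (z 1 / 2) * deriv α (z 0) * z 3) _ z :=
    (((p1.mul_const (2:ℝ)⁻¹).mul hB).mul p3)
  have h5 : HasFDerivAt (fun z : Fin 6 → ℝ => -(z 1 * z 2 / 2) * deriv (deriv α) (z 0)) _ z :=
    ((((p1.mul p2).mul_const (2:ℝ)⁻¹).neg).mul hC)
  have e0 : (fun z : Fin 6 → ℝ => dsY α z 0) = fun _ => (0:ℝ) := by funext z; simp [dsY]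
  have e1 : (fun z : Fin 6 → ℝ => dsY α z 1) = fun z => α (z 0) := by funext z; simp [dsY]
  have e2 : (fun z : Fin 6 → ℝ => dsY α z 2) = fun _ => (0:ℝ) := by funext z; simp [dsY]
  have e3 : (fun z : Fin 6 → ℝ => dsY α z 3)
      = fun z => -(z 1 / 2) * deriv α (z 0) * z 4 := by funext z; simp [dsY]
  have e4 : (fun z : Fin 6 → ℝ => dsY α z 4)
      = fun z => (z 1 / 2) * deriv α (z 0) * z 3 := by funext z; simp [dsY]
  have e5 : (fun z : Fin 6 → ℝ => dsY α z 5)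
      = fun z => -(z 1 * z 2 / 2) * deriv (deriv α) (z 0) := rfl
  have hdiff : ∀ i, DifferentiableAt ℝ (fun z : Fin 6 → ℝ => dsY α z i) z := by
    intro i
    fin_cases i
    · exact (hasFDerivAt_const (0:ℝ) z).differentiableAt
    · exact hA.differentiableAt
    · exact (hasFDerivAt_const (0:ℝ) z).differentiableAt
    · exact h3.differentiableAt
    · exact h4.differentiableAt
    · exact h5.differentiableAt
  have key : fderiv ℝ (dsY α) z = ContinuousLinearMap.pi
      (fun i => fderiv ℝ (fun z : Fin 6 → ℝ => dsY α z i) z) := fderiv_pi hdiff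
  rw [key]
  funext i
  rw [ContinuousLinearMap.pi_apply]
  fin_cases i
  · show (fderiv ℝ (fun z : Fin 6 → ℝ => dsY α z 0) z) w = (0:ℝ)
    rw [e0]; simp
  · show (fderiv ℝ (fun z : Fin 6 → ℝ => dsY α z 1) z) w = deriv α (z 0) * w 0
    rw [e1, hA.fderiv]; simp
  · show (fderiv ℝ (fun z : Fin 6 → ℝ => dsY α z 2) z) w = (0:ℝ)
    rw [e2]; simp
  · show (fderiv ℝ (fun z : Fin 6 → ℝ => dsY α z 3) z) w
        = -(w 1 / 2) * deriv α (z 0) * z 4 - (z 1 / 2) * deriv (deriv α) (z 0) * w 0 * z 4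
          - (z 1 / 2) * deriv α (z 0) * w 4
    rw [e3, h3.fderiv]; simp; ring
  · show (fderiv ℝ (fun z : Fin 6 → ℝ => dsY α z 4) z) w
        = (w 1 / 2) * deriv α (z 0) * z 3 + (z 1 / 2) * deriv (deriv α) (z 0) * w 0 * z 3
          + (z 1 / 2) * deriv α (z 0) * w 3
    rw [e4, h4.fderiv]; simp; ring
  · show (fderiv ℝ (fun z : Fin 6 → ℝ => dsY α z 5) z) w
        = -((w 1 * z 2 + z 1 * w 2) / 2) * deriv (deriv α) (z 0)
          - (z 1 * z 2 / 2) * deriv (deriv (deriv α)) (z 0) * w 0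
    rw [e5, h5.fderiv]; simp; ring

/-- the Kac--Moody-type commutation relation
`[𝒴(α₁), 𝒴(α₂)] = −½𝒲(α₁α̇₂ − α̇₁α₂)` of the symmetry algebra of the
Davey--Stewartson system. -/
theorem ds_kac_moody_commutation (α₁ α₂ : ℝ → ℝ)
    (hα₁ : ContDiff ℝ (⊤ : ℕ∞) α₁) (hα₂ : ContDiff ℝ (⊤ : ℕ∞) α₂) (z : Fin 6 → ℝ) :
    fderiv ℝ (dsY α₂) z (dsY α₁ z) - fderiv ℝ (dsY α₁) z (dsY α₂ z)
      = -(1 / 2 : ℝ) • dsW (fun t => α₁ t * deriv α₂ t - deriv α₁ t * α₂ t) z := by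
  obtain ⟨hd1, hα₁'⟩ := contDiff_infty_iff_deriv.mp (hα₁.of_le (by simp))
  obtain ⟨hd1', -⟩ := contDiff_infty_iff_deriv.mp hα₁'
  obtain ⟨hd2, hα₂'⟩ := contDiff_infty_iff_deriv.mp (hα₂.of_le (by simp))
  obtain ⟨hd2', -⟩ := contDiff_infty_iff_deriv.mp hα₂'
  have dμ : deriv (fun t => α₁ t * deriv α₂ t - deriv α₁ t * α₂ t) (z 0)
      = α₁ (z 0) * deriv (deriv α₂) (z 0) - deriv (deriv α₁) (z 0) * α₂ (z 0) := by
    rw [deriv_fun_sub (f := fun t => α₁ t * deriv α₂ t) (g := fun t => deriv α₁ t * α₂ t) ((hd1 _).mul (hd2' _)) ((hd1' _).mul (hd2 _)),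
      deriv_fun_mul (hd1 _) (hd2' _), deriv_fun_mul (hd1' _) (hd2 _)]
    ring
  rw [fderiv_dsY_apply α₂ hα₂ z (dsY α₁ z), fderiv_dsY_apply α₁ hα₁ z (dsY α₂ z)]
  funext i
  fin_cases i
  · show (0:ℝ) - 0 = -(1/2:ℝ) * 0
    ring
  · show deriv α₂ (z 0) * (0:ℝ) - deriv α₁ (z 0) * 0 = -(1/2:ℝ) * 0
    ring
  · show (0:ℝ) - 0 = -(1/2:ℝ) * 0
    ring
  · show (-(α₁ (z 0) / 2) * deriv α₂ (z 0) * z 4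
          - (z 1 / 2) * deriv (deriv α₂) (z 0) * 0 * z 4
          - (z 1 / 2) * deriv α₂ (z 0) * ((z 1 / 2) * deriv α₁ (z 0) * z 3))
        - (-(α₂ (z 0) / 2) * deriv α₁ (z 0) * z 4
          - (z 1 / 2) * deriv (deriv α₁) (z 0) * 0 * z 4
          - (z 1 / 2) * deriv α₁ (z 0) * ((z 1 / 2) * deriv α₂ (z 0) * z 3))
        = -(1/2:ℝ) * ((α₁ (z 0) * deriv α₂ (z 0) - deriv α₁ (z 0) * α₂ (z 0)) * z 4)
    ring
  · show ((α₁ (z 0) / 2) * deriv α₂ (z 0) * z 3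
          + (z 1 / 2) * deriv (deriv α₂) (z 0) * 0 * z 3
          + (z 1 / 2) * deriv α₂ (z 0) * (-(z 1 / 2) * deriv α₁ (z 0) * z 4))
        - ((α₂ (z 0) / 2) * deriv α₁ (z 0) * z 3
          + (z 1 / 2) * deriv (deriv α₁) (z 0) * 0 * z 3
          + (z 1 / 2) * deriv α₁ (z 0) * (-(z 1 / 2) * deriv α₂ (z 0) * z 4))
        = -(1/2:ℝ) * (-((α₁ (z 0) * deriv α₂ (z 0) - deriv α₁ (z 0) * α₂ (z 0))) * z 3)
    ring
  · show (-((α₁ (z 0) * z 2 + z 1 * 0) / 2) * deriv (deriv α₂) (z 0)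
          - (z 1 * z 2 / 2) * deriv (deriv (deriv α₂)) (z 0) * 0)
        - (-((α₂ (z 0) * z 2 + z 1 * 0) / 2) * deriv (deriv α₁) (z 0)
          - (z 1 * z 2 / 2) * deriv (deriv (deriv α₁)) (z 0) * 0)
        = -(1/2:ℝ) * (z 2 * deriv (fun t => α₁ t * deriv α₂ t - deriv α₁ t * α₂ t) (z 0))
    rw [dμ]; ring
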